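/- arXiv:1204.2975 — 3 statements merged into one kernel-verified Lean document; each statement's English description precedes it below -/
import Mathlib

section
/- For any type Q of sequences of length N over a finite alphabet X, the size of the type class T_Q^N satisfies (N+1)^{-|X|} · exp(N·H(Q)) ≤ |T_Q^N| ≤ exp(N·H(Q)), where H(Q) is the Shannon entropy of Q (with exp and log to the same base). -/
/-- The empirical distribution (type) of a sequence `x : Fin N → X`. -/
noncomputable def empDist {X : Type*} [Fintype X] [DecidableEq X] {N : ℕ}
    (x : Fin N → X) : X → ℝ :=
  fun a => ((Finset.univ.filter (fun n => x n = a)).card : ℝ) / N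

/-- Shannon entropy of a distribution `Q` on a finite set. -/
noncomputable def shannonEntropy {X : Type*} [Fintype X] (Q : X → ℝ) : ℝ :=
  -∑ a, Q a * Real.log (Q a)

/-!
Under the product law `Q^N`, every sequence of type `Q` has probability
`∏ₐ Q(a)^{N Q(a)} = exp (-N H(Q))`, so `|T_Q| exp (-N H(Q)) = Q^N(T_Q) ≤ 1`. Conversely, the
type classes partition `X^N` into at most `(N + 1)^|X|` pieces, and comparing multinomial
coefficients through `kᵐ k! ≤ kᵏ m!` shows that `T_Q` has the largest `Q^N`-probability among
them; hence `Q^N(T_Q) ≥ (N + 1)^{-|X|}`. Multiplying by `N^N` keeps all of this in `ℕ`: the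
weights `∏ᵢ N Q(yᵢ)` are natural numbers with total `N^N`.
-/

open Finset Real
open scoped Nat

section Counting

variable {ι X : Type*} [Fintype ι] [DecidableEq X]

def counts (x : ι → X) (a : X) : ℕ := #{i | x i = a}

lemma counts_eq_card_subtype (x : ι → X) (a : X) :
    counts x a = Fintype.card {i // x i = a} :=
  (Fintype.card_subtype _).symm

lemma counts_le_card (x : ι → X) (a : X) : counts x a ≤ Fintype.card ι :=
  card_filter_le _ _

lemma counts_comp_perm (x : ι → X) (σ : Equiv.Perm ι) : counts (x ∘ σ) = counts x := by
  ext a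
  simp only [counts_eq_card_subtype]
  exact Fintype.card_congr (σ.subtypeEquiv fun i => Iff.rfl)

lemma exists_perm_comp_eq_of_counts_eq {x y : ι → X} (h : counts y = counts x) :
    ∃ σ : Equiv.Perm ι, x ∘ σ = y := by
  have e (a : X) : {i // y i = a} ≃ {i // x i = a} :=
    Fintype.equivOfCardEq (by rw [← counts_eq_card_subtype, ← counts_eq_card_subtype, h])
  exact ⟨Equiv.ofFiberEquiv e, funext (Equiv.ofFiberEquiv_map e)⟩

-- `(Equiv.Perm ι)ᵈᵐᵃ` acts on `ι → X` by precomposition.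
open MulAction in
lemma orbit_domMulAct_perm (x : ι → X) :
    orbit (Equiv.Perm ι)ᵈᵐᵃ x = {y | counts y = counts x} := by
  ext y
  constructor
  · rintro ⟨σ, rfl⟩
    exact counts_comp_perm x (DomMulAct.mk.symm σ)
  · intro h
    obtain ⟨σ, rfl⟩ := exists_perm_comp_eq_of_counts_eq h
    exact ⟨DomMulAct.mk σ, rfl⟩

variable [Fintype X]

lemma sum_counts (x : ι → X) : ∑ a, counts x a = Fintype.card ι := by
  rw [← Finset.card_univ, card_eq_sum_card_fiberwise fun i _ => mem_univ (x i)]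
  rfl

lemma prod_comp_eq_prod_pow_counts {M : Type*} [CommMonoid M] (f : X → M) (x : ι → X) :
    ∏ i, f (x i) = ∏ a, f a ^ counts x a := by
  rw [← prod_fiberwise univ x]
  exact prod_congr rfl fun a _ => by
    rw [prod_congr rfl fun i hi => by rw [(mem_filter.mp hi).2], prod_const]; rfl

variable [DecidableEq ι]

variable (ι) in
def typeClass (k : X → ℕ) : Finset (ι → X) := {y | counts y = k}

open MulAction in
lemma card_typeClass_mul_prod_factorial (x : ι → X) :
    #(typeClass ι (counts x)) * ∏ a, (counts x a)! = (Fintype.card ι)! := by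
  have hstab : Nat.card (stabilizer (Equiv.Perm ι)ᵈᵐᵃ x) = ∏ a, (counts x a)! := by
    rw [Nat.card_congr (DomMulAct.mk.symm.subtypeEquiv fun _ => Iff.rfl :
        stabilizer (Equiv.Perm ι)ᵈᵐᵃ x ≃ {σ : Equiv.Perm ι // x ∘ σ = x}),
      Nat.card_eq_fintype_card, DomMulAct.stabilizer_card]
    simp only [counts_eq_card_subtype]
  have horbit : (stabilizer (Equiv.Perm ι)ᵈᵐᵃ x).index = #(typeClass ι (counts x)) := by
    rw [index_stabilizer, orbit_domMulAct_perm, typeClass, ← Set.ncard_coe_finset, coe_filter]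
    simp
  rw [← hstab, ← horbit, mul_comm, Subgroup.card_mul_index, Nat.card_congr DomMulAct.mk.symm,
    Nat.card_perm, Nat.card_eq_fintype_card]

lemma sum_typeClass_prod_comp {R : Type*} [CommSemiring R] (f : X → R) (v : X → ℕ) :
    ∑ y ∈ typeClass ι v, ∏ i, f (y i) = #(typeClass ι v) • ∏ a, f a ^ v a := by
  rw [sum_congr rfl fun y hy => by
    rw [prod_comp_eq_prod_pow_counts, (mem_filter.mp hy).2], sum_const]

lemma sum_prod_comp_counts (x : ι → X) :
    ∑ y : ι → X, ∏ i, counts x (y i) = Fintype.card ι ^ Fintype.card ι := by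
  rw [← Fintype.prod_sum, prod_const, sum_counts, Finset.card_univ]

end Counting

lemma pow_mul_factorial_le_pow_mul_factorial (k m : ℕ) : k ^ m * k ! ≤ k ^ k * m ! := by
  rcases le_total k m with h | h
  · calc k ^ m * k ! = k ^ k * (k ! * k ^ (m - k)) := by
          rw [mul_left_comm, ← pow_add, Nat.add_sub_cancel' h, mul_comm]
      _ ≤ k ^ k * m ! := Nat.mul_le_mul_left _ (Nat.factorial_mul_pow_sub_le_factorial h)
  · calc k ^ m * k ! = k ^ m * (m ! * k.descFactorial (k - m)) := by
          rw [← Nat.factorial_mul_descFactorial (Nat.sub_le k m), Nat.sub_sub_self h]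
      _ ≤ k ^ m * (m ! * k ^ (k - m)) := by gcongr; exact Nat.descFactorial_le_pow k _
      _ = k ^ k * m ! := by rw [mul_left_comm, ← pow_add, Nat.add_sub_cancel' h, mul_comm]

section Bounds

variable {ι X : Type*} [Fintype ι] [DecidableEq ι] [Fintype X] [DecidableEq X]

lemma card_typeClass_mul_prod_pow_le (x : ι → X) (v : X → ℕ) :
    #(typeClass ι v) * ∏ a, counts x a ^ v a
      ≤ #(typeClass ι (counts x)) * ∏ a, counts x a ^ counts x a := by
  obtain hv | ⟨y, hy⟩ := (typeClass ι v).eq_empty_or_nonempty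
  · simp [hv]
  obtain rfl : counts y = v := (mem_filter.mp hy).2
  set k := counts x
  set m := counts y
  refine Nat.le_of_mul_le_mul_right ?_ (by positivity : 0 < (∏ a, (m a)!) * ∏ a, (k a)!)
  calc #(typeClass ι m) * (∏ a, k a ^ m a) * ((∏ a, (m a)!) * ∏ a, (k a)!)
      = (#(typeClass ι m) * ∏ a, (m a)!) * ∏ a, (k a ^ m a * (k a)!) := by
        rw [prod_mul_distrib]; ring
    _ ≤ (#(typeClass ι k) * ∏ a, (k a)!) * ∏ a, (k a ^ k a * (m a)!) := by
        rw [card_typeClass_mul_prod_factorial, card_typeClass_mul_prod_factorial]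
        exact Nat.mul_le_mul_left _
          (prod_le_prod' fun a _ => pow_mul_factorial_le_pow_mul_factorial (k a) (m a))
    _ = #(typeClass ι k) * (∏ a, k a ^ k a) * ((∏ a, (m a)!) * ∏ a, (k a)!) := by
        rw [prod_mul_distrib]; ring

lemma card_typeClass_mul_prod_pow_le_pow (x : ι → X) :
    #(typeClass ι (counts x)) * ∏ a, counts x a ^ counts x a
      ≤ Fintype.card ι ^ Fintype.card ι := by
  rw [← smul_eq_mul, ← sum_typeClass_prod_comp, ← sum_prod_comp_counts x]
  exact sum_le_sum_of_subset (subset_univ _)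

lemma pow_le_card_typeClass_mul_prod_pow (x : ι → X) :
    Fintype.card ι ^ Fintype.card ι
      ≤ (Fintype.card ι + 1) ^ Fintype.card X
        * (#(typeClass ι (counts x)) * ∏ a, counts x a ^ counts x a) := by
  set N := Fintype.card ι
  set ranges : Finset (X → ℕ) := Fintype.piFinset fun _ => range (N + 1)
  have hmaps : ∀ y ∈ (univ : Finset (ι → X)), counts y ∈ ranges := fun y _ =>
    Fintype.mem_piFinset.mpr fun a => mem_range_succ_iff.mpr (counts_le_card y a)
  calc N ^ N = ∑ v ∈ ranges, ∑ y ∈ typeClass ι v, ∏ i, counts x (y i) := by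
        rw [← sum_prod_comp_counts x, ← sum_fiberwise_of_maps_to hmaps]; rfl
    _ ≤ ∑ _v ∈ ranges, #(typeClass ι (counts x)) * ∏ a, counts x a ^ counts x a := by
        gcongr with v
        rw [sum_typeClass_prod_comp, smul_eq_mul]
        exact card_typeClass_mul_prod_pow_le x v
    _ = (N + 1) ^ Fintype.card X
          * (#(typeClass ι (counts x)) * ∏ a, counts x a ^ counts x a) := by
        rw [sum_const, smul_eq_mul, Fintype.card_piFinset, prod_const, card_range,
          Finset.card_univ]

end Bounds

lemma natCast_pow_self_eq_exp (n : ℕ) : (n : ℝ) ^ n = exp (n * log n) := by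
  rcases Nat.eq_zero_or_pos n with rfl | hn
  · simp
  · rw [exp_nat_mul, exp_log (by positivity)]

section EmpiricalDistribution

variable {X : Type*} [Fintype X] [DecidableEq X] {N : ℕ}

lemma empDist_apply (x : Fin N → X) (a : X) : empDist x a = counts x a / N := rfl

lemma empDist_eq_empDist_iff (x y : Fin N → X) :
    empDist x = empDist y ↔ counts x = counts y := by
  refine ⟨fun h => ?_, fun h => funext fun a => by rw [empDist_apply, empDist_apply, h]⟩
  rcases Nat.eq_zero_or_pos N with rfl | hN
  · rw [Subsingleton.elim x y]
  · funext a
    have := congrFun h a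
    rw [empDist_apply, empDist_apply, div_left_inj' (by positivity)] at this
    exact_mod_cast this

lemma mul_shannonEntropy_empDist (x : Fin N → X) :
    N * shannonEntropy (empDist x) = N * log N - ∑ a, counts x a * log (counts x a) := by
  have hterm (a : X) :
      N * (empDist x a * log (empDist x a)) = counts x a * (log (counts x a) - log N) := by
    obtain h | h := Nat.eq_zero_or_pos (counts x a)
    · simp [empDist_apply, h]
    have hN : 0 < N := h.trans_le (by simpa using counts_le_card x a)
    rw [empDist_apply, log_div (by positivity) (by positivity)]
    field_simp
  have hsum : ∑ a, (counts x a : ℝ) = N := by exact_mod_cast (sum_counts x).trans (by simp)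
  rw [shannonEntropy, mul_neg, mul_sum, sum_congr rfl fun a _ => hterm a]
  simp only [mul_sub, sum_sub_distrib, ← sum_mul, hsum]
  ring

lemma prod_pow_counts_mul_exp_entropy (x : Fin N → X) :
    (∏ a, (counts x a : ℝ) ^ counts x a) * exp (N * shannonEntropy (empDist x)) = N ^ N := by
  simp only [natCast_pow_self_eq_exp, ← exp_sum, ← exp_add, mul_shannonEntropy_empDist]
  ring_nf

end EmpiricalDistribution

theorem type_class_size_general (X : Type*) [Fintype X] [DecidableEq X] (N : ℕ)
    (Q : X → ℝ) (hQ : ∃ x : Fin N → X, empDist x = Q) :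
    (((N : ℝ) + 1) ^ Fintype.card X)⁻¹ * Real.exp (N * shannonEntropy Q)
        ≤ (Nat.card {x : Fin N → X // empDist x = Q} : ℝ) ∧
      (Nat.card {x : Fin N → X // empDist x = Q} : ℝ) ≤ Real.exp (N * shannonEntropy Q) := by
  obtain ⟨x, rfl⟩ := hQ
  have hcard :
      Nat.card {y : Fin N → X // empDist y = empDist x} = #(typeClass (Fin N) (counts x)) := by
    rw [Nat.card_eq_fintype_card, Fintype.card_subtype]
    simp only [typeClass, empDist_eq_empDist_iff]
  have upper : (#(typeClass (Fin N) (counts x)) : ℝ) * ∏ a, (counts x a : ℝ) ^ counts x a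
      ≤ N ^ N := by
    exact_mod_cast Fintype.card_fin N ▸ card_typeClass_mul_prod_pow_le_pow x
  have lower : (N : ℝ) ^ N ≤ (N + 1) ^ Fintype.card X
      * (#(typeClass (Fin N) (counts x)) * ∏ a, (counts x a : ℝ) ^ counts x a) := by
    exact_mod_cast Fintype.card_fin N ▸ pow_le_card_typeClass_mul_prod_pow x
  have hPE := prod_pow_counts_mul_exp_entropy x
  set P := ∏ a, (counts x a : ℝ) ^ counts x a
  have hP : 0 < P := by
    have hNN : (0 : ℝ) < N ^ N := by exact_mod_cast Nat.pow_self_pos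
    exact pos_of_mul_pos_left (hPE ▸ hNN) (exp_pos _).le
  rw [hcard, inv_mul_le_iff₀ (by positivity)]
  constructor
  · exact le_of_mul_le_mul_right (by linarith) hP
  · exact le_of_mul_le_mul_right (by linarith) hP

/-- Bounds on the size of a type class:
`(N+1)^{-|X|} exp(N H(Q)) ≤ |T_Q^N| ≤ exp(N H(Q))`. -/
theorem type_class_size (X : Type*) [Fintype X] [DecidableEq X] (N : ℕ) (hN : 0 < N)
    (Q : X → ℝ) (hQ : ∃ x : Fin N → X, empDist x = Q) :
    (((N : ℝ) + 1) ^ Fintype.card X)⁻¹ * Real.exp (N * shannonEntropy Q)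
        ≤ (Nat.card {x : Fin N → X // empDist x = Q} : ℝ) ∧
      (Nat.card {x : Fin N → X // empDist x = Q} : ℝ) ≤ Real.exp (N * shannonEntropy Q) :=
  type_class_size_general X N Q hQ
end

section
/- For any type Q of length-N sequences over a finite alphabet X and any probability distribution G on X with full support, the i.i.d. probability of the type class satisfies G^N(T_Q^N) ≤ exp(-N·D(Q‖G)). -/
/-- Kullback–Leibler divergence of `Q` from `G` on a finite set. -/
noncomputable def dKL {X : Type*} [Fintype X] (Q G : X → ℝ) : ℝ :=
  ∑ a, Q a * Real.log (Q a / G a)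

/-- `G` is a probability distribution on a finite set. -/
def IsProb {X : Type*} [Fintype X] (G : X → ℝ) : Prop :=
  (∀ a, 0 ≤ G a) ∧ ∑ a, G a = 1

/-!
On the type class of `Q`, the likelihood ratio of `G^N` against `Q^N` is the constant
`exp (-N D(Q‖G))`: both products only depend on the letter counts `N Q(a)`. Summing over the
type class therefore gives `G^N(T_Q^N) = exp (-N D(Q‖G)) Q^N(T_Q^N) ≤ exp (-N D(Q‖G))`.
-/

open Finset Real

section EmpiricalDistribution

variable {X : Type*} [Fintype X] {N : ℕ}

theorem sum_prod_le_one_of_isProb {Q : X → ℝ} (hQ : IsProb Q) (s : Finset (Fin N → X)) :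
    ∑ x ∈ s, ∏ n, Q (x n) ≤ 1 :=
  calc ∑ x ∈ s, ∏ n, Q (x n) ≤ ∑ x : Fin N → X, ∏ n, Q (x n) :=
        sum_le_univ_sum_of_nonneg fun x => prod_nonneg fun n _ => hQ.1 (x n)
    _ = (∑ a, Q a) ^ N := (Fintype.sum_pow Q N).symm
    _ = 1 := by rw [hQ.2, one_pow]

variable [DecidableEq X]

theorem natCast_mul_empDist (x : Fin N → X) (a : X) :
    (N : ℝ) * empDist x a = #{n | x n = a} := by
  rcases N.eq_zero_or_pos with rfl | _
  · simp
  · simp only [empDist]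
    field_simp

theorem empDist_apply_self_pos (x : Fin N → X) (n : Fin N) : 0 < empDist x (x n) := by
  have hcard : 0 < #{m | x m = x n} := card_pos.mpr ⟨n, by simp⟩
  have hN : 0 < N := n.pos
  simp only [empDist]
  positivity

theorem isProb_empDist (hN : 0 < N) (x : Fin N → X) : IsProb (empDist x) := by
  refine ⟨fun a => by simp only [empDist]; positivity, ?_⟩
  have hcount : ∑ a, #{n | x n = a} = N := by simp [sum_card_fiberwise_eq_card_filter]
  simp only [empDist, ← sum_div]
  rw [← Nat.cast_sum, hcount, div_self (Nat.cast_ne_zero.mpr hN.ne')]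

theorem natCast_mul_dKL_empDist (x : Fin N → X) (G : X → ℝ) :
    N * dKL (empDist x) G = ∑ n, log (empDist x (x n) / G (x n)) := by
  rw [← sum_fiberwise' univ x fun a => log (empDist x a / G a), dKL, mul_sum]
  refine sum_congr rfl fun a _ => ?_
  rw [sum_const, nsmul_eq_mul, ← mul_assoc, natCast_mul_empDist]

theorem prod_eq_exp_neg_dKL_mul_prod_empDist {G : X → ℝ} (hG : ∀ a, 0 < G a)
    (x : Fin N → X) :
    ∏ n, G (x n) = exp (-(N * dKL (empDist x) G)) * ∏ n, empDist x (x n) := by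
  rw [natCast_mul_dKL_empDist, ← sum_neg_distrib, exp_sum, ← prod_mul_distrib]
  refine prod_congr rfl fun n _ => ?_
  have hQ := empDist_apply_self_pos x n
  rw [exp_neg, exp_log (div_pos hQ (hG _)), inv_div, div_mul_cancel₀ _ hQ.ne']

end EmpiricalDistribution

theorem prob_type_class_upper_general (X : Type*) [Fintype X] [DecidableEq X] (N : ℕ) (hN : 0 < N)
    (G : X → ℝ) (hGpos : ∀ a, 0 < G a)
    (Q : X → ℝ) (hQ : ∃ x : Fin N → X, empDist x = Q) :
    ∑ x ∈ Finset.univ.filter (fun x : Fin N → X => empDist x = Q), ∏ n, G (x n)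
      ≤ Real.exp (-(N * dKL Q G)) := by
  obtain ⟨x₀, rfl⟩ := hQ
  set T := univ.filter fun x : Fin N → X => empDist x = empDist x₀
  have hratio : ∀ x ∈ T,
      ∏ n, G (x n) = exp (-(N * dKL (empDist x₀) G)) * ∏ n, empDist x₀ (x n) :=
    fun x hx => by rw [prod_eq_exp_neg_dKL_mul_prod_empDist hGpos, (mem_filter.mp hx).2]
  calc ∑ x ∈ T, ∏ n, G (x n)
      = exp (-(N * dKL (empDist x₀) G)) * ∑ x ∈ T, ∏ n, empDist x₀ (x n) := by
        rw [sum_congr rfl hratio, mul_sum]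
    _ ≤ exp (-(N * dKL (empDist x₀) G)) * 1 :=
        mul_le_mul_of_nonneg_left (sum_prod_le_one_of_isProb (isProb_empDist hN x₀) T)
          (exp_pos _).le
    _ = exp (-(N * dKL (empDist x₀) G)) := mul_one _

/-- Upper bound for the i.i.d. probability of a type class:
`G^N(T_Q^N) ≤ exp(-N D(Q‖G))`. -/
theorem prob_type_class_upper (X : Type*) [Fintype X] [DecidableEq X] (N : ℕ) (hN : 0 < N)
    (G : X → ℝ) (hG : IsProb G) (hGpos : ∀ a, 0 < G a)
    (Q : X → ℝ) (hQ : ∃ x : Fin N → X, empDist x = Q) :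
    ∑ x ∈ Finset.univ.filter (fun x : Fin N → X => empDist x = Q), ∏ n, G (x n)
      ≤ Real.exp (-(N * dKL Q G)) :=
  prob_type_class_upper_general X N hN G hGpos Q hQ
end

section
/- For independent tests on two objects with M hypotheses each, if the individual error probabilities satisfy α_{l_1|m_1}, α_{l_2|m_2} ∈ (0,1) and the compound error probability is the product α_{l_1,l_2|m_1,m_2}(N) = α_{l_1|m_1}(N)·α_{l_2|m_2}(N) for (l_1,l_2) ≠ (m_1,m_2), while α_{m_1,m_2|m_1,m_2}(N) = ∑_{(l_1,l_2)≠(m_1,m_2)} α_{l_1,l_2|m_1,m_2}(N), then, assuming all individual exponents E_{l|m} = lim_N (-1/N) log α_{l|m}(N) exist and are positive, the compound diagonal exponent satisfies E_{m_1,m_2|m_1,m_2} = min( min_{l_1 ≠ m_1} E_{l_1|m_1}, min_{l_2 ≠ m_2} E_{l_2|m_2} ). -/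
/-!
Since the two tests are independent, every off-diagonal compound error probability is a product
`p₁(l₁) p₂(l₂)`, where `pᵢ(l)` is the probability that test `i` decides `l`. The exponent of
`pᵢ(l)` is `E_{l|mᵢ}` for `l ≠ mᵢ` and `0` for `l = mᵢ`: a positive exponent forces
`α_{mᵢ|mᵢ}(N) → 0`, so `log (1 - α_{mᵢ|mᵢ}(N)) → 0`. Exponents add under products, and a finite
sum of positive sequences has the smallest of their exponents, as `max a b ≤ a + b ≤ 2 max a b`.
Minimising `e₁(l₁) + e₂(l₂)` over `(l₁, l₂) ≠ (m₁, m₂)`, it pays to put one coordinate on the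
truth, which leaves the smaller of the two worst individual exponents.
-/

open Filter Finset

def HasErrorExponent (a : ℕ → ℝ) (E : ℝ) : Prop :=
  Tendsto (fun N : ℕ => -(1 / (N : ℝ)) * Real.log (a N)) atTop (nhds E)

namespace HasErrorExponent

variable {a b : ℕ → ℝ} {E F : ℝ}

theorem congr (h : HasErrorExponent a E) (hab : ∀ N, a N = b N) : HasErrorExponent b E := by
  simpa only [HasErrorExponent, hab] using h

theorem tendsto_zero (h : HasErrorExponent a E) (ha : ∀ N, 0 < a N) (hE : 0 < E) :
    Tendsto a atTop (nhds 0) := by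
  have hlog : Tendsto (fun N : ℕ => Real.log (a N)) atTop atBot := by
    have hgrow := (tendsto_natCast_atTop_atTop (R := ℝ)).atTop_mul_pos hE h
    refine (tendsto_neg_atBot_iff.mpr hgrow).congr' ?_
    filter_upwards [eventually_ne_atTop 0] with N hN
    field_simp
  simpa only [Function.comp_def, Real.exp_log (ha _)] using Real.tendsto_exp_atBot.comp hlog

theorem of_tendsto {c : ℝ} (h : Tendsto a atTop (nhds c)) (hc : c ≠ 0) :
    HasErrorExponent a 0 := by
  have hlog := (Real.continuousAt_log hc).tendsto.comp h
  unfold HasErrorExponent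
  simpa using (tendsto_one_div_atTop_nhds_zero_nat (𝕜 := ℝ)).neg.mul hlog

theorem mul (ha : HasErrorExponent a E) (hb : HasErrorExponent b F)
    (ha0 : ∀ N, a N ≠ 0) (hb0 : ∀ N, b N ≠ 0) :
    HasErrorExponent (fun N => a N * b N) (E + F) := by
  refine (ha.add hb).congr fun N => ?_
  simp only [Real.log_mul (ha0 N) (hb0 N)]
  ring

theorem max (ha : HasErrorExponent a E) (hb : HasErrorExponent b F)
    (ha0 : ∀ N, 0 < a N) (hb0 : ∀ N, 0 < b N) :
    HasErrorExponent (fun N => Max.max (a N) (b N)) (min E F) := by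
  refine (ha.min hb).congr fun N => ?_
  have hlog :
      Real.log (Max.max (a N) (b N)) = Max.max (Real.log (a N)) (Real.log (b N)) :=
    Real.strictMonoOn_log.monotoneOn.map_max (ha0 N) (hb0 N)
  rw [hlog, neg_mul, neg_mul, neg_mul, mul_max_of_nonneg _ _ (by positivity), min_neg_neg]

theorem of_le_of_le_mul {C : ℝ} (hb : HasErrorExponent b E) (hb0 : ∀ N, 0 < b N)
    (hba : ∀ N, b N ≤ a N) (hab : ∀ N, a N ≤ C * b N) : HasErrorExponent a E := by
  have hC : 0 < C := pos_of_mul_pos_left ((hb0 0).trans_le ((hba 0).trans (hab 0))) (hb0 0).le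
  have hupper : HasErrorExponent (fun N => C * b N) E := by
    simpa using (of_tendsto tendsto_const_nhds hC.ne').mul hb (fun _ => hC.ne')
      (fun N => (hb0 N).ne')
  refine tendsto_of_tendsto_of_tendsto_of_le_of_le hupper hb (fun N => ?_) (fun N => ?_)
  all_goals
    refine mul_le_mul_of_nonpos_left (Real.log_le_log ?_ ?_) (by simp)
  exacts [(hb0 N).trans_le (hba N), hab N, hb0 N, hba N]

theorem add (ha : HasErrorExponent a E) (hb : HasErrorExponent b F)
    (ha0 : ∀ N, 0 < a N) (hb0 : ∀ N, 0 < b N) :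
    HasErrorExponent (fun N => a N + b N) (min E F) :=
  of_le_of_le_mul (C := 2) (ha.max hb ha0 hb0) (fun N => lt_max_of_lt_left (ha0 N))
    (fun N => max_le_add_of_nonneg (ha0 N).le (hb0 N).le)
    (fun N => by linarith [le_max_left (a N) (b N), le_max_right (a N) (b N)])

theorem sum {ι : Type*} {s : Finset ι} (hs : s.Nonempty) {a : ι → ℕ → ℝ}
    {E : ι → ℝ} (ha : ∀ i ∈ s, HasErrorExponent (a i) (E i)) (ha0 : ∀ i ∈ s, ∀ N, 0 < a i N) :
    HasErrorExponent (fun N => ∑ i ∈ s, a i N) (s.inf' hs E) := by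
  induction hs using Finset.Nonempty.cons_induction with
  | singleton i => simpa using ha i (mem_singleton_self i)
  | cons i s hi hs ih =>
    rw [inf'_cons hs]
    simp only [sum_cons]
    exact (ha i (mem_cons_self i s)).add (ih (fun j hj => ha j (mem_cons_of_mem hj))
        (fun j hj => ha0 j (mem_cons_of_mem hj)))
      (ha0 i (mem_cons_self i s)) (fun N => sum_pos (fun j hj => ha0 j (mem_cons_of_mem hj) N) hs)

end HasErrorExponent

section Decision

variable {ι : Type*} [DecidableEq ι]

/-- With `α N l = α_{l|m}(N)` for `l ≠ m` and `α N m = α_{m|m}(N)` the total error probability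
under hypothesis `m`, this is the probability that the test decides `l` when `m` is true. -/
def decisionProb (α : ℕ → ι → ℝ) (m : ι) (N : ℕ) (l : ι) : ℝ :=
  if l = m then 1 - α N m else α N l

def decisionExponent (E : ι → ℝ) (m l : ι) : ℝ :=
  if l = m then 0 else E l

theorem decisionProb_pos {α : ℕ → ι → ℝ} (hα : ∀ N l, 0 < α N l ∧ α N l < 1) (m : ι) (N : ℕ)
    (l : ι) : 0 < decisionProb α m N l := by
  unfold decisionProb
  split_ifs
  exacts [sub_pos.2 (hα N m).2, (hα N l).1]

theorem hasErrorExponent_decisionProb {α : ℕ → ι → ℝ} {E : ι → ℝ} {m : ι}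
    (hα : ∀ N, 0 < α N m) (hE : ∀ l, HasErrorExponent (fun N => α N l) (E l)) (hEm : 0 < E m)
    (l : ι) : HasErrorExponent (fun N => decisionProb α m N l) (decisionExponent E m l) := by
  unfold decisionProb decisionExponent
  split_ifs
  · simpa using HasErrorExponent.of_tendsto (((hE m).tendsto_zero hα hEm).const_sub 1) (by norm_num)
  · exact hE l

theorem inf'_erase_decisionExponent_add {κ : Type*} [DecidableEq κ] [Fintype ι] [Fintype κ]
    {E : ι → ℝ} {F : κ → ℝ} (hF : ∀ j, 0 ≤ F j) {m : ι} {n : κ}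
    (hm : (univ.erase m).Nonempty) (hn : (univ.erase n).Nonempty)
    (hmn : (univ.erase (m, n)).Nonempty) :
    (univ.erase (m, n)).inf' hmn (fun p => decisionExponent E m p.1 + decisionExponent F n p.2)
      = min ((univ.erase m).inf' hm E) ((univ.erase n).inf' hn F) := by
  set g : ι × κ → ℝ := fun p => decisionExponent E m p.1 + decisionExponent F n p.2
  apply le_antisymm
  · refine le_min (le_inf' _ _ fun i hi => ?_) (le_inf' _ _ fun j hj => ?_)
    · have hi : i ≠ m := ne_of_mem_erase hi
      calc _ ≤ g (i, n) := inf'_le g (by simp [hi])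
        _ = E i := by simp [g, decisionExponent, hi]
    · have hj : j ≠ n := ne_of_mem_erase hj
      calc _ ≤ g (m, j) := inf'_le g (by simp [hj])
        _ = F j := by simp [g, decisionExponent, hj]
  · refine le_inf' _ _ fun ⟨i, j⟩ hij => ?_
    by_cases hi : i = m
    · subst hi
      have hj : j ≠ n := fun hj => ne_of_mem_erase hij (by rw [hj])
      calc _ ≤ (univ.erase n).inf' hn F := min_le_right _ _
        _ ≤ F j := inf'_le F (by simp [hj])
        _ = g (i, j) := by simp [g, decisionExponent, hj]
    · have hFj : 0 ≤ decisionExponent F n j := by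
        unfold decisionExponent
        split_ifs
        exacts [le_rfl, hF j]
      calc _ ≤ (univ.erase m).inf' hm E := min_le_left _ _
        _ ≤ E i := inf'_le E (by simp [hi])
        _ ≤ E i + decisionExponent F n j := le_add_of_nonneg_right hFj
        _ = g (i, j) := by simp [g, decisionExponent, hi]

end Decision

theorem sInf_setOf_ne_eq_inf' {ι : Type*} [Fintype ι] [DecidableEq ι] (f : ι → ℝ) (m : ι)
    (h : (univ.erase m).Nonempty) :
    sInf {e : ℝ | ∃ l, l ≠ m ∧ e = f l} = (univ.erase m).inf' h f := by
  rw [inf'_eq_csInf_image]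
  congr 1
  ext
  simp [eq_comm]

/-- For independent tests on two objects, the diagonal exponent of the
compound test equals the minimum of the two individual worst off-diagonal
exponents (Lemma 4.1 combined with the min-rule). -/
theorem compound_diagonal_exponent (M : ℕ) (hM : 2 ≤ M)
    (α1 α2 : ℕ → Fin M → Fin M → ℝ)
    (hα1 : ∀ N l m, 0 < α1 N l m ∧ α1 N l m < 1)
    (hα2 : ∀ N l m, 0 < α2 N l m ∧ α2 N l m < 1)
    (E1 E2 : Fin M → Fin M → ℝ)
    (hE1 : ∀ l m, Tendsto (fun N : ℕ => -(1 / (N : ℝ)) * Real.log (α1 N l m))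
      atTop (nhds (E1 l m)))
    (hE2 : ∀ l m, Tendsto (fun N : ℕ => -(1 / (N : ℝ)) * Real.log (α2 N l m))
      atTop (nhds (E2 l m)))
    (hE1pos : ∀ l m, 0 < E1 l m) (hE2pos : ∀ l m, 0 < E2 l m)
    (m1 m2 : Fin M)
    (αc : ℕ → Fin M × Fin M → ℝ)
    (hc1 : ∀ N (l1 l2 : Fin M), l1 ≠ m1 → l2 ≠ m2 →
      αc N (l1, l2) = α1 N l1 m1 * α2 N l2 m2)
    (hc2 : ∀ N (l2 : Fin M), l2 ≠ m2 →
      αc N (m1, l2) = (1 - α1 N m1 m1) * α2 N l2 m2)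
    (hc3 : ∀ N (l1 : Fin M), l1 ≠ m1 →
      αc N (l1, m2) = α1 N l1 m1 * (1 - α2 N m2 m2)) :
    limsup (fun N : ℕ => -(1 / (N : ℝ)) *
        Real.log (∑ p ∈ Finset.univ.erase (m1, m2), αc N p)) atTop
      = min (sInf {e : ℝ | ∃ l1, l1 ≠ m1 ∧ e = E1 l1 m1})
            (sInf {e : ℝ | ∃ l2, l2 ≠ m2 ∧ e = E2 l2 m2}) := by
  have : Nontrivial (Fin M) := Fin.nontrivial_iff_two_le.mpr hM
  have hne : ∀ m : Fin M, (univ.erase m).Nonempty := fun m =>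
    (exists_ne m).imp fun l hl => by simpa using hl
  obtain ⟨l1, hl1⟩ := exists_ne m1
  have hs : (univ.erase (m1, m2)).Nonempty := ⟨(l1, m2), by simp [hl1]⟩
  set d1 := decisionProb (fun N l => α1 N l m1) m1
  set d2 := decisionProb (fun N l => α2 N l m2) m2
  have hfactor : ∀ p ∈ univ.erase (m1, m2), ∀ N, αc N p = d1 N p.1 * d2 N p.2 := by
    rintro ⟨l1, l2⟩ hp N
    have hp : (l1, l2) ≠ (m1, m2) := ne_of_mem_erase hp
    by_cases h1 : l1 = m1 <;> by_cases h2 : l2 = m2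
    · exact absurd (by rw [h1, h2]) hp
    · subst h1; simp [d1, d2, decisionProb, hc2 N l2 h2, h2]
    · subst h2; simp [d1, d2, decisionProb, hc3 N l1 h1, h1]
    · simp [d1, d2, decisionProb, hc1 N l1 l2 h1 h2, h1, h2]
  have hd1 := hasErrorExponent_decisionProb (α := fun N l => α1 N l m1) (E := (E1 · m1))
    (fun N => (hα1 N m1 m1).1) (hE1 · m1) (hE1pos m1 m1)
  have hd2 := hasErrorExponent_decisionProb (α := fun N l => α2 N l m2) (E := (E2 · m2))
    (fun N => (hα2 N m2 m2).1) (hE2 · m2) (hE2pos m2 m2)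
  have hd1pos := decisionProb_pos (fun N l => hα1 N l m1) m1
  have hd2pos := decisionProb_pos (fun N l => hα2 N l m2) m2
  have hsum := HasErrorExponent.sum hs
    (fun p hp => ((hd1 p.1).mul (hd2 p.2) (fun N => (hd1pos N p.1).ne')
      (fun N => (hd2pos N p.2).ne')).congr fun N => (hfactor p hp N).symm)
    (fun p hp N => hfactor p hp N ▸ mul_pos (hd1pos N p.1) (hd2pos N p.2))
  rw [Tendsto.limsup_eq hsum, sInf_setOf_ne_eq_inf' (fun l => E1 l m1) m1 (hne m1),
    sInf_setOf_ne_eq_inf' (fun l => E2 l m2) m2 (hne m2),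
    inf'_erase_decisionExponent_add (fun l => (hE2pos l m2).le)]
end
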